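/- Let A ⊆ Ω and B ⊆ Ω be fields with C = A ∩ B, and suppose A^s and B^s are linearly disjoint over C^s (where K^s is the separable closure). Then for any σ₁ ∈ Gal(A^s/A) and σ₂ ∈ Gal(B^s/B) with σ₁|_{C^s} = σ₂|_{C^s}, there exists σ ∈ Gal(A^sB^s/AB) restricting to σ₁ on A^s and to σ₂ on B^s. -/

import Mathlib

namespace PacPaper
variable {Ω : Type} [Field Ω] [IsAlgClosed Ω]

/-- The separable closure of a subfield `K` inside `Ω`. -/
noncomputable def sepCl (K : Subfield Ω) : Subfield Ω := (separableClosure K Ω).toSubfield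

/-- The (relative) algebraic closure of a subfield `K` inside `Ω`. -/
noncomputable def algCl (K : Subfield Ω) : Subfield Ω := (algebraicClosure K Ω).toSubfield

/-- The perfect (purely inseparable) closure of a subfield `K` inside `Ω`. -/
noncomputable def pCl (K : Subfield Ω) : Subfield Ω := (perfectClosure K Ω).toSubfield

/-- `A` and `B` are linearly disjoint over a common subfield `E`:
every finite subset of `A` which is linearly independent over `E` remains
linearly independent over `B`. -/
def LinDisj (E A B : Subfield Ω) : Prop :=
  ∀ s : Finset Ω, ↑s ⊆ (A : Set Ω) →
    LinearIndependent E (Subtype.val : {x : Ω // x ∈ s} → Ω) →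
    LinearIndependent B (Subtype.val : {x : Ω // x ∈ s} → Ω)

/-- `A` and `B` are free over `E`: every finite subset of `A` which is
algebraically independent over `E` remains algebraically independent over `B`. -/
def FreeOver (E A B : Subfield Ω) : Prop :=
  ∀ s : Finset Ω, ↑s ⊆ (A : Set Ω) →
    AlgebraicIndependent E (Subtype.val : {x : Ω // x ∈ s} → Ω) →
    AlgebraicIndependent B (Subtype.val : {x : Ω // x ∈ s} → Ω)

/-- `L` is a regular extension of `K`: `K ≤ L` and `L` is linearly disjoint
over `K` from the algebraic closure of `K`. -/
def IsRegularExt (K L : Subfield Ω) : Prop := K ≤ L ∧ LinDisj K L (algCl K)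

/-- `L` is a separable extension of `K`: `K ≤ L` and `L` is linearly disjoint
over `K` from the perfect closure of `K`. -/
def IsSepExt (K L : Subfield Ω) : Prop := K ≤ L ∧ LinDisj K L (pCl K)

/-- `K` is separably closed (in `Ω`). -/
def IsSepClosedIn (K : Subfield Ω) : Prop := sepCl K = K

/-- The Galois group `Gal(X/Y)`: ring automorphisms of `X` fixing the
elements of `X` lying in `Y`. -/
def galGrp (Y X : Subfield Ω) : Subgroup (X ≃+* X) where
  carrier := {f | ∀ x : X, (x : Ω) ∈ Y → f x = x}
  one_mem' := by intro x _; rfl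
  mul_mem' := by
    intro f g hf hg x hx
    show f (g x) = x
    rw [hg x hx, hf x hx]
  inv_mem' := by
    intro f hf x hx
    show f.symm x = x
    conv_lhs => rw [← hf x hx]
    exact f.symm_apply_apply x

/-- `f` (an automorphism of `S`) and `g` (an automorphism of `T`) agree on the
elements of the subfield `U`. -/
def Agree {S T : Subfield Ω} (f : S ≃+* S) (g : T ≃+* T) (U : Subfield Ω) : Prop :=
  ∀ (x : Ω) (h₁ : x ∈ S) (h₂ : x ∈ T), x ∈ U →
    ((f ⟨x, h₁⟩ : Ω) = (g ⟨x, h₂⟩ : Ω))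

/-- `σ` (an automorphism of the larger field `X`) restricts to `τ` on the
subfield `S`. -/
def RestrictsTo {X S : Subfield Ω} (σ : X ≃+* X) (τ : S ≃+* S) : Prop :=
  Agree σ τ S

end PacPaper

/-! Linear disjointness identifies the ring generated by `A^s` and `B^s` with
`A^s ⊗_{C^s} B^s`. An element of `Gal(A^s/A)` maps `C^s` onto itself (it fixes `A ∩ B`, so it sends
elements separable over `A ∩ B` to conjugates), hence `σ₁` and `σ₂` are semilinear over the same
automorphism of `C^s` and `σ₁ ⊗ σ₂` is a ring automorphism of the tensor product. Transported to
the ring generated by `A^s` and `B^s` and extended to its fraction field `A^sB^s`, it is the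
required `σ`; it fixes `A` and `B`, hence `AB`. -/

open scoped TensorProduct
namespace Algebra.TensorProduct

variable {R A B : Type*} [CommRing R] [CommRing A] [CommRing B] [Algebra R A] [Algebra R B]

noncomputable def semilinearCongr (τ : R ≃+* R) (σ₁ : A ≃+* A) (σ₂ : B ≃+* B)
    (h₁ : ∀ (r : R) (a : A), σ₁ (r • a) = τ r • σ₁ a)
    (h₂ : ∀ (r : R) (b : B), σ₂ (r • b) = τ r • σ₂ b) :
    A ⊗[R] B ≃+* A ⊗[R] B :=
  letI := RingHomInvPair.of_ringEquiv τ
  letI := RingHomInvPair.of_ringEquiv_symm τ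
  let e := _root_.TensorProduct.congr (σ₁₂ := (τ : R →+* R))
    { σ₁.toAddEquiv with map_smul' := h₁ } { σ₂.toAddEquiv with map_smul' := h₂ }
  { e.toAddEquiv with
    map_mul' := fun x y => by
      change e (x * y) = e x * e y
      induction x using TensorProduct.induction_on with
      | zero => simp
      | add x x' hx hx' => simp only [add_mul, map_add, hx, hx']
      | tmul a b =>
        induction y using TensorProduct.induction_on with
        | zero => simp
        | add y y' hy hy' => simp only [mul_add, map_add, hy, hy']
        | tmul a' b' => simp [e, _root_.TensorProduct.congr_tmul] }

@[simp]
theorem semilinearCongr_tmul (τ : R ≃+* R) (σ₁ : A ≃+* A) (σ₂ : B ≃+* B)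
    (h₁ : ∀ (r : R) (a : A), σ₁ (r • a) = τ r • σ₁ a)
    (h₂ : ∀ (r : R) (b : B), σ₂ (r • b) = τ r • σ₂ b) (a : A) (b : B) :
    semilinearCongr τ σ₁ σ₂ h₁ h₂ (a ⊗ₜ b) = σ₁ a ⊗ₜ σ₂ b :=
  rfl

end Algebra.TensorProduct

namespace Subalgebra.LinearDisjoint

variable {R S : Type*} [CommRing R] [CommRing S] [Algebra R S] {A B : Subalgebra R S}

theorem exists_ringEquiv_sup (H : A.LinearDisjoint B) (τ : R ≃+* R) (σ₁ : A ≃+* A)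
    (σ₂ : B ≃+* B) (h₁ : ∀ (r : R) (a : A), σ₁ (r • a) = τ r • σ₁ a)
    (h₂ : ∀ (r : R) (b : B), σ₂ (r • b) = τ r • σ₂ b) :
    ∃ θ : ↥(A ⊔ B) ≃+* ↥(A ⊔ B),
      (∀ a : A, (θ (inclusion le_sup_left a) : S) = σ₁ a) ∧
      (∀ b : B, (θ (inclusion le_sup_right b) : S) = σ₂ b) := by
  refine ⟨H.mulMap.symm.toRingEquiv.trans
    ((Algebra.TensorProduct.semilinearCongr τ σ₁ σ₂ h₁ h₂).trans H.mulMap.toRingEquiv), ?_, ?_⟩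
  · intro a
    have : inclusion le_sup_left a = H.mulMap (a ⊗ₜ 1) := Subtype.ext (by simp)
    simp [this]
  · intro b
    have : inclusion le_sup_right b = H.mulMap (1 ⊗ₜ b) := Subtype.ext (by simp)
    simp [this]

end Subalgebra.LinearDisjoint

namespace Subfield

variable {F : Type*} [Field F]

def toSubalgebraOfLE (K : Subfield F) {C : Subfield F} (hCK : C ≤ K) : Subalgebra C F :=
  (K.toIntermediateField fun c => hCK c.2).toSubalgebra

variable {C K : Subfield F}

def restrictRingEquiv (hCK : C ≤ K) (σ : K ≃+* K)
    (h : ∀ x : K, (x : F) ∈ C ↔ (σ x : F) ∈ C) : C ≃+* C where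
  toFun c := ⟨σ ⟨c, hCK c.2⟩, (h _).1 c.2⟩
  invFun c := ⟨σ.symm ⟨c, hCK c.2⟩, (h _).2 (by simp)⟩
  left_inv c := by simp
  right_inv c := by simp
  map_mul' x y := Subtype.ext (congrArg Subtype.val (map_mul σ ⟨x, hCK x.2⟩ ⟨y, hCK y.2⟩) :)
  map_add' x y := Subtype.ext (congrArg Subtype.val (map_add σ ⟨x, hCK x.2⟩ ⟨y, hCK y.2⟩) :)

theorem exists_ringEquiv_extend {E : Subfield F} {R₀ : Subring F} (hle : R₀ ≤ E.toSubring)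
    (hE : E ≤ closure (R₀ : Set F)) (θ : R₀ ≃+* R₀) :
    ∃ σ : E ≃+* E, ∀ x : R₀, (σ ⟨x, hle x.2⟩ : F) = θ x := by
  let : Algebra R₀ E := (R₀.subtype.codRestrict E fun x => hle x.2).toAlgebra
  have : FaithfulSMul R₀ E := (faithfulSMul_iff_algebraMap_injective R₀ E).2
    fun x y h => Subtype.ext (congrArg Subtype.val h :)
  have : IsFractionRing R₀ E := IsFractionRing.of_field R₀ E fun z => by
    obtain ⟨y, hy, w, hw, hyw⟩ := mem_closure_iff.1 (hE z.2)
    rw [Subring.closure_eq] at hy hw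
    exact ⟨⟨y, hy⟩, ⟨w, hw⟩, Subtype.ext (by simp [← hyw]; rfl)⟩
  exact ⟨IsFractionRing.ringEquivOfRingEquiv θ, fun x =>
    congrArg Subtype.val (IsFractionRing.ringEquivOfRingEquiv_algebraMap θ x)⟩

end Subfield

namespace PacPaper

variable {Ω : Type} [Field Ω]

theorem LinDisj.linearIndependent {C K L : Subfield Ω} (h : LinDisj C K L) {ι : Type*}
    {v : ι → Ω} (hvK : ∀ i, v i ∈ K) (hv : LinearIndependent C v) : LinearIndependent L v := by
  rw [← linearIndepOn_id_range_iff hv.injective]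
  rw [← linearIndepOn_id_range_iff hv.injective] at hv
  refine linearIndepOn_of_finite _ fun t hts htf => ?_
  lift t to Finset Ω using htf
  exact h t (hts.trans (Set.range_subset_iff.2 hvK)) (hv.mono hts)

theorem LinDisj.linearDisjoint {C K L : Subfield Ω} (hCK : C ≤ K) (hCL : C ≤ L)
    (h : LinDisj C K L) : (K.toSubalgebraOfLE hCK).LinearDisjoint (L.toSubalgebraOfLE hCL) := by
  let b := Module.Basis.ofVectorSpace C (K.toSubalgebraOfLE hCK)
  have hbL : LinearIndependent L fun i => (b i : Ω) := h.linearIndependent (fun i => (b i).2)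
    (b.linearIndependent.map' (K.toSubalgebraOfLE hCK).val.toLinearMap
      (LinearMap.ker_eq_bot.2 Subtype.val_injective))
  exact .of_basis_left _ _ b <| hbL.map_of_injective_injectiveₛ (fun x => ⟨x.1, x.2⟩)
    (AddMonoidHom.id Ω) (fun x y hxy => Subtype.ext (congrArg Subtype.val hxy :))
    Function.injective_id fun _ _ => rfl

theorem exists_ringEquiv_sup_restrictsTo {C K L : Subfield Ω} (hCK : C ≤ K) (hCL : C ≤ L)
    (hdisj : LinDisj C K L) (σ₁ : K ≃+* K) (σ₂ : L ≃+* L)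
    (hC : ∀ x : K, (x : Ω) ∈ C ↔ (σ₁ x : Ω) ∈ C) (hag : Agree σ₁ σ₂ C) :
    ∃ σ : ↥(K ⊔ L) ≃+* ↥(K ⊔ L), RestrictsTo σ σ₁ ∧ RestrictsTo σ σ₂ := by
  set K' := K.toSubalgebraOfLE hCK
  set L' := L.toSubalgebraOfLE hCL
  let τ := Subfield.restrictRingEquiv hCK σ₁ hC
  -- `K'` and `K` (resp. `L'` and `L`) have definitionally the same elements.
  let σ₁' : K' ≃+* K' := σ₁
  let σ₂' : L' ≃+* L' := σ₂
  have h₁ : ∀ (c : C) (a : K'), σ₁' (c • a) = τ c • σ₁' a := fun c a =>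
    map_mul σ₁ ⟨c, hCK c.2⟩ a
  have h₂ : ∀ (c : C) (b : L'), σ₂' (c • b) = τ c • σ₂' b := fun c b =>
    Subtype.ext <| (congrArg Subtype.val (map_mul σ₂ ⟨c, hCL c.2⟩ b)).trans
      (congrArg (· * (σ₂ b : Ω)) (hag c (hCK c.2) (hCL c.2) c.2).symm)
  obtain ⟨θ, hθ₁, hθ₂⟩ := (hdisj.linearDisjoint hCK hCL).exists_ringEquiv_sup τ σ₁' σ₂' h₁ h₂
  have hle : (K' ⊔ L').toSubring ≤ (K ⊔ L).toSubring := by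
    have : K' ⊔ L' ≤ (K ⊔ L).toSubalgebraOfLE (hCK.trans le_sup_left) :=
      sup_le (fun x hx => (le_sup_left : K ≤ K ⊔ L) hx) fun x hx => (le_sup_right : L ≤ K ⊔ L) hx
    exact fun x hx => this hx
  have hE : K ⊔ L ≤ Subfield.closure ((K' ⊔ L').toSubring : Set Ω) :=
    sup_le (fun x hx => Subfield.subset_closure ((le_sup_left : K' ≤ K' ⊔ L') hx))
      fun x hx => Subfield.subset_closure ((le_sup_right : L' ≤ K' ⊔ L') hx)
  obtain ⟨σ, hσ⟩ := Subfield.exists_ringEquiv_extend hle hE θ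
  refine ⟨σ, fun x hx hxK _ => ?_, fun x hx hxL _ => ?_⟩
  · exact (hσ ⟨x, (le_sup_left : K' ≤ K' ⊔ L') hxK⟩).trans (hθ₁ ⟨x, hxK⟩)
  · exact (hσ ⟨x, (le_sup_right : L' ≤ K' ⊔ L') hxL⟩).trans (hθ₂ ⟨x, hxL⟩)

theorem le_sepCl (A : Subfield Ω) : A ≤ sepCl A := fun x hx =>
  (separableClosure A Ω).algebraMap_mem ⟨x, hx⟩

theorem sepCl_mono {D A : Subfield Ω} (h : D ≤ A) : sepCl D ≤ sepCl A := by
  let _ : Algebra D A := (Subfield.inclusion h).toAlgebra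
  have : IsScalarTower D A Ω := .of_algebraMap_eq fun _ => rfl
  intro x hx
  rw [sepCl, IntermediateField.mem_toSubfield, mem_separableClosure_iff] at hx ⊢
  exact hx.tower_top A

theorem minpoly_coe_map_of_mem_galGrp {D X : Subfield Ω} (hDX : D ≤ X) {σ : X ≃+* X}
    (hσ : σ ∈ galGrp D X) (x : X) : minpoly D (σ x : Ω) = minpoly D (x : Ω) := by
  let _ : Algebra D X := (Subfield.inclusion hDX).toAlgebra
  have : IsScalarTower D X Ω := .of_algebraMap_eq fun _ => rfl
  let f : X ≃ₐ[D] X := AlgEquiv.ofRingEquiv (f := σ) fun d => hσ _ d.2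
  change minpoly D (algebraMap X Ω (f x)) = minpoly D (algebraMap X Ω x)
  rw [minpoly.algebraMap_eq Subtype.val_injective, minpoly.algebraMap_eq Subtype.val_injective,
    minpoly.algEquiv_eq]

theorem coe_map_mem_sepCl_iff {D X : Subfield Ω} (hDX : D ≤ X) {σ : X ≃+* X}
    (hσ : σ ∈ galGrp D X) (x : X) : (σ x : Ω) ∈ sepCl D ↔ (x : Ω) ∈ sepCl D := by
  simp only [sepCl, IntermediateField.mem_toSubfield, mem_separableClosure_iff, IsSeparable,
    minpoly_coe_map_of_mem_galGrp hDX hσ]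

theorem mem_galGrp_of_restrictsTo {Y S X : Subfield Ω} (hYS : Y ≤ S) {σ : X ≃+* X}
    {τ : S ≃+* S} (h : RestrictsTo σ τ) (hτ : τ ∈ galGrp Y S) : σ ∈ galGrp Y X :=
  fun u hu => Subtype.ext <| (h u u.2 (hYS hu) (hYS hu)).trans (congrArg Subtype.val (hτ _ hu))

theorem mem_galGrp_sup {A B X : Subfield Ω} (hA : A ≤ X) (hB : B ≤ X) {σ : X ≃+* X}
    (hσA : σ ∈ galGrp A X) (hσB : σ ∈ galGrp B X) : σ ∈ galGrp (A ⊔ B) X := by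
  let E := (RingHom.eqLocusField (σ : X →+* X) (RingHom.id X)).map X.subtype
  have hAE : A ≤ E := fun a ha => ⟨⟨a, hA ha⟩, hσA _ ha, rfl⟩
  have hBE : B ≤ E := fun b hb => ⟨⟨b, hB hb⟩, hσB _ hb, rfl⟩
  intro u hu
  obtain ⟨v, hv, hvu⟩ := sup_le hAE hBE hu
  obtain rfl : v = u := Subtype.ext hvu
  exact hv

end PacPaper

open PacPaper in
theorem exists_common_extension_of_linearly_disjoint_general
    (Ω : Type) [Field Ω] (A B : Subfield Ω)
    (hdisj : LinDisj (sepCl (A ⊓ B)) (sepCl A) (sepCl B)) :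
    ∀ σ₁ ∈ galGrp A (sepCl A), ∀ σ₂ ∈ galGrp B (sepCl B),
      Agree σ₁ σ₂ (sepCl (A ⊓ B)) →
      ∃ σ ∈ galGrp (A ⊔ B) (sepCl A ⊔ sepCl B),
        RestrictsTo σ σ₁ ∧ RestrictsTo σ σ₂ := by
  intro σ₁ hσ₁ σ₂ hσ₂ hagree
  have hσ₁C : ∀ x : sepCl A, (x : Ω) ∈ sepCl (A ⊓ B) ↔ (σ₁ x : Ω) ∈ sepCl (A ⊓ B) :=
    fun x => (coe_map_mem_sepCl_iff (inf_le_left.trans (le_sepCl A))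
      (fun u hu => hσ₁ u (inf_le_left (b := B) hu)) x).symm
  obtain ⟨σ, hσ₁', hσ₂'⟩ := exists_ringEquiv_sup_restrictsTo (sepCl_mono inf_le_left)
    (sepCl_mono inf_le_right) hdisj σ₁ σ₂ hσ₁C hagree
  exact ⟨σ, mem_galGrp_sup ((le_sepCl A).trans le_sup_left) ((le_sepCl B).trans le_sup_right)
    (mem_galGrp_of_restrictsTo (le_sepCl A) hσ₁' hσ₁)
    (mem_galGrp_of_restrictsTo (le_sepCl B) hσ₂' hσ₂), hσ₁', hσ₂'⟩

open PacPaper in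
/-- Let `A`, `B` be subfields of `Ω` with `C = A ∩ B`, and suppose `A^s` and
`B^s` are linearly disjoint over `C^s`.  Then any `σ₁ ∈ Gal(A^s/A)` and
`σ₂ ∈ Gal(B^s/B)` agreeing on `C^s` have a common extension
`σ ∈ Gal(A^sB^s/AB)` restricting to `σ₁` on `A^s` and to `σ₂` on `B^s`. -/
theorem exists_common_extension_of_linearly_disjoint
    (Ω : Type) [Field Ω] [IsAlgClosed Ω] (A B : Subfield Ω)
    (hdisj : LinDisj (sepCl (A ⊓ B)) (sepCl A) (sepCl B)) :
    ∀ σ₁ ∈ galGrp A (sepCl A), ∀ σ₂ ∈ galGrp B (sepCl B),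
      Agree σ₁ σ₂ (sepCl (A ⊓ B)) →
      ∃ σ ∈ galGrp (A ⊔ B) (sepCl A ⊔ sepCl B),
        RestrictsTo σ σ₁ ∧ RestrictsTo σ σ₂ :=
  exists_common_extension_of_linearly_disjoint_general Ω A B hdisj
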